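/- arXiv:1507.06840 — 2 statements merged into one kernel-verified Lean document; each statement's English description precedes it below -/
import Mathlib

section
/- Let E be a VE-space over a topologically ordered *-space Z and let p be an increasing continuous seminorm on Z. Then for all e, f ∈ E, p([e,f]) ≤ 4 · p([e,e])^{1/2} · p([f,f])^{1/2}. -/
/-
Polarisation writes `4 [e, f]` as a combination, with unimodular coefficients, of the four
gramians `[e + iᵏ f, e + iᵏ f]`. By the parallelogram law and monotonicity of `p`, each of them
has seminorm at most `2 (p [e, e] + p [f, f])`, whence `p [e, f] ≤ 2 (p [e, e] + p [f, f])`.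
Since `[e, f]` is unchanged under `e ↦ √t e`, `f ↦ f / √t`, this gives
`p [e, f] ≤ 2 (t p [e, e] + p [f, f] / t)` for every `t > 0`, and optimising over `t` yields
`4 √(p [e, e]) √(p [f, f])`.
-/

/-- An ordered *-space: a complex vector space with a conjugate-linear involution
and a strict cone of selfadjoint elements. The order is `x ≤ y ↔ y - x ∈ pos`. -/
structure OrderedStarSpace (Z : Type*) [AddCommGroup Z] [Module ℂ Z] where
  star : Z → Z
  star_add : ∀ x y : Z, star (x + y) = star x + star y
  star_smul : ∀ (c : ℂ) (x : Z), star (c • x) = (starRingEnd ℂ) c • star x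
  star_involutive : ∀ x : Z, star (star x) = x
  pos : Set Z
  pos_add : ∀ x ∈ pos, ∀ y ∈ pos, x + y ∈ pos
  pos_smul : ∀ (r : ℝ), 0 ≤ r → ∀ x ∈ pos, (r : ℂ) • x ∈ pos
  pos_strict : ∀ x ∈ pos, -x ∈ pos → x = 0
  pos_selfadjoint : ∀ x ∈ pos, star x = x

/-- A `Z`-valued gramian making `E` a VE-space over the ordered *-space `Z`. -/
structure VEGramian {Z : Type*} [AddCommGroup Z] [Module ℂ Z]
    (O : OrderedStarSpace Z) (E : Type*) [AddCommGroup E] [Module ℂ E] where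
  ip : E → E → Z
  add_right : ∀ x y z : E, ip x (y + z) = ip x y + ip x z
  smul_right : ∀ (c : ℂ) (x y : E), ip x (c • y) = c • ip x y
  herm : ∀ x y : E, ip x y = O.star (ip y x)
  ip_pos : ∀ x : E, ip x x ∈ O.pos
  definite : ∀ x : E, ip x x = 0 → x = 0

/-- An increasing seminorm on the ordered *-space `Z`. -/
structure IncSeminorm {Z : Type*} [AddCommGroup Z] [Module ℂ Z]
    (O : OrderedStarSpace Z) where
  p : Z → ℝ
  nonneg : ∀ x : Z, 0 ≤ p x
  add_le : ∀ x y : Z, p (x + y) ≤ p x + p y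
  smul : ∀ (c : ℂ) (x : Z), p (c • x) = ‖c‖ * p x
  mono : ∀ x y : Z, x ∈ O.pos → y - x ∈ O.pos → p x ≤ p y

open Complex Finset ComplexConjugate

lemma le_two_mul_mul_of_forall_pos_le {P u v : ℝ} (hu : 0 ≤ u) (hv : 0 ≤ v)
    (h : ∀ t > 0, P ≤ t * u ^ 2 + v ^ 2 / t) : P ≤ 2 * u * v := by
  refine le_of_forall_pos_le_add fun ε hε => ?_
  set δ := ε / (u + v + 1)
  have hδ : 0 < δ := by positivity
  -- `t = (v + δ) / (u + δ)` balances the two terms up to an error `δ (u + v)`.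
  have hbal : (v + δ) / (u + δ) * u ^ 2 + v ^ 2 / ((v + δ) / (u + δ))
      ≤ 2 * u * v + δ * (u + v) := by
    have h1 : (v + δ) / (u + δ) * u ^ 2 ≤ (v + δ) * u := by
      rw [div_mul_eq_mul_div, div_le_iff₀ (by positivity)]
      nlinarith [mul_nonneg (add_nonneg hv hδ.le) (mul_nonneg hu hδ.le)]
    have h2 : v ^ 2 / ((v + δ) / (u + δ)) ≤ v * (u + δ) := by
      rw [div_div_eq_mul_div, div_le_iff₀ (by positivity)]
      nlinarith [mul_nonneg (add_nonneg hu hδ.le) (mul_nonneg hv hδ.le)]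
    linarith
  have hδε : δ * (u + v) ≤ ε := by
    rw [div_mul_eq_mul_div, div_le_iff₀ (by positivity)]
    nlinarith
  linarith [h _ (by positivity : (0:ℝ) < (v + δ) / (u + δ))]

namespace IncSeminorm

variable {Z : Type*} [AddCommGroup Z] [Module ℂ Z] {O : OrderedStarSpace Z} (N : IncSeminorm O)

lemma p_zero : N.p 0 = 0 := by
  simpa using N.smul 0 0

lemma p_sum_le {ι : Type*} (s : Finset ι) (g : ι → Z) : N.p (∑ i ∈ s, g i) ≤ ∑ i ∈ s, N.p (g i) :=
  le_sum_of_subadditive N.p N.p_zero.le N.add_le s g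

end IncSeminorm

namespace VEGramian

variable {Z E : Type*} [AddCommGroup Z] [Module ℂ Z] [AddCommGroup E] [Module ℂ E]
  {O : OrderedStarSpace Z} (G : VEGramian O E)

lemma add_left (x y z : E) : G.ip (x + y) z = G.ip x z + G.ip y z := by
  rw [G.herm, G.add_right, O.star_add, ← G.herm, ← G.herm]

lemma smul_left (c : ℂ) (x y : E) : G.ip (c • x) y = conj c • G.ip x y := by
  rw [G.herm, G.smul_right, O.star_smul, ← G.herm]

lemma smul_smul (c d : ℂ) (x y : E) : G.ip (c • x) (d • y) = (conj c * d) • G.ip x y := by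
  rw [smul_left, G.smul_right, _root_.smul_smul]

lemma add_smul_self (c : ℂ) (x y : E) :
    G.ip (x + c • y) (x + c • y) =
      G.ip x x + c • G.ip x y + conj c • G.ip y x + (conj c * c) • G.ip y y := by
  rw [add_left, G.add_right, G.add_right, smul_left, smul_left, G.smul_right c x y,
    G.smul_right c y y, _root_.smul_smul]
  abel

lemma parallelogram (h k : E) :
    G.ip (h + k) (h + k) + G.ip (h - k) (h - k) = (2 : ℂ) • (G.ip h h + G.ip k k) := by
  have hadd := G.add_smul_self 1 h k
  rw [one_smul] at hadd
  rw [sub_eq_add_neg, ← neg_one_smul ℂ k, hadd, add_smul_self]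
  simp only [map_one, map_neg]
  module

lemma polarization (x y : E) :
    (4 : ℂ) • G.ip x y = ∑ k ∈ range 4, conj (I ^ k) • G.ip (x + I ^ k • y) (x + I ^ k • y) := by
  simp only [sum_range_succ, sum_range_zero, add_smul_self, map_pow, conj_I]
  match_scalars <;> simp [pow_succ]
  norm_num

variable (N : IncSeminorm O)

lemma seminorm_smul_self (c : ℂ) (x : E) :
    N.p (G.ip (c • x) (c • x)) = ‖c‖ ^ 2 * N.p (G.ip x x) := by
  rw [smul_smul, N.smul, norm_mul, norm_conj, sq]

lemma seminorm_add_self_le (h k : E) :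
    N.p (G.ip (h + k) (h + k)) ≤ 2 * (N.p (G.ip h h) + N.p (G.ip k k)) := by
  have hle : (2 : ℂ) • (G.ip h h + G.ip k k) - G.ip (h + k) (h + k) ∈ O.pos := by
    rw [← parallelogram, add_sub_cancel_left]
    exact G.ip_pos _
  calc N.p (G.ip (h + k) (h + k)) ≤ N.p ((2 : ℂ) • (G.ip h h + G.ip k k)) :=
        N.mono _ _ (G.ip_pos _) hle
    _ ≤ 2 * (N.p (G.ip h h) + N.p (G.ip k k)) := by
        rw [N.smul, Complex.norm_two]
        gcongr
        exact N.add_le _ _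

lemma seminorm_le (x y : E) : N.p (G.ip x y) ≤ 2 * (N.p (G.ip x x) + N.p (G.ip y y)) := by
  have hterm : ∀ k ∈ range 4, N.p (conj (I ^ k) • G.ip (x + I ^ k • y) (x + I ^ k • y)) ≤
      2 * (N.p (G.ip x x) + N.p (G.ip y y)) := fun k _ => by
    have hy : N.p (G.ip (I ^ k • y) (I ^ k • y)) = N.p (G.ip y y) := by
      simp [seminorm_smul_self]
    rw [N.smul, norm_conj, norm_pow, norm_I, one_pow, one_mul, ← hy]
    exact seminorm_add_self_le G N x _
  have h4 := (N.p_sum_le _ _).trans (sum_le_sum hterm)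
  rw [← polarization, N.smul, sum_const, card_range, norm_ofNat, nsmul_eq_mul] at h4
  push_cast at h4
  linarith

lemma seminorm_le_of_pos (x y : E) {t : ℝ} (ht : 0 < t) :
    N.p (G.ip x y) ≤ 2 * (t * N.p (G.ip x x) + N.p (G.ip y y) / t) := by
  set s : ℂ := (Real.sqrt t : ℂ)
  have hs : s ≠ 0 := by simpa [s] using (Real.sqrt_pos.2 ht).ne'
  have hs2 : ‖s‖ ^ 2 = t := by simp [s, Complex.norm_real, Real.sq_sqrt ht.le]
  have hinv : ‖s⁻¹‖ ^ 2 = t⁻¹ := by rw [norm_inv, inv_pow, hs2]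
  have hxy : G.ip (s • x) (s⁻¹ • y) = G.ip x y := by
    rw [smul_smul, conj_ofReal, mul_inv_cancel₀ hs, one_smul]
  have := seminorm_le G N (s • x) (s⁻¹ • y)
  rwa [hxy, seminorm_smul_self, seminorm_smul_self, hs2, hinv, ← div_eq_inv_mul] at this

end VEGramian

theorem four_schwarz_general {Z E : Type*} [AddCommGroup Z] [Module ℂ Z]
    [AddCommGroup E] [Module ℂ E]
    (O : OrderedStarSpace Z) (N : IncSeminorm O)
    (G : VEGramian O E) :
    ∀ e f : E, N.p (G.ip e f) ≤
      4 * Real.sqrt (N.p (G.ip e e)) * Real.sqrt (N.p (G.ip f f)) := by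
  intro e f
  have key := le_two_mul_mul_of_forall_pos_le (P := N.p (G.ip e f) / 2)
    (Real.sqrt_nonneg (N.p (G.ip e e))) (Real.sqrt_nonneg (N.p (G.ip f f))) fun t ht => by
      rw [Real.sq_sqrt (N.nonneg _), Real.sq_sqrt (N.nonneg _)]
      linarith [G.seminorm_le_of_pos N e f ht]
  linarith

/-- Corollary: surrogate Schwarz inequality: for an increasing
continuous seminorm `p` on a topologically ordered *-space `Z` and a VE-space
`E` over `Z`, `p([e,f]) ≤ 4 p([e,e])^{1/2} p([f,f])^{1/2}`. -/
theorem four_schwarz {Z E : Type*} [AddCommGroup Z] [Module ℂ Z]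
    [TopologicalSpace Z] [AddCommGroup E] [Module ℂ E]
    (O : OrderedStarSpace Z) (N : IncSeminorm O) (hcont : Continuous N.p)
    (G : VEGramian O E) :
    ∀ e f : E, N.p (G.ip e f) ≤
      4 * Real.sqrt (N.p (G.ip e e)) * Real.sqrt (N.p (G.ip f f)) :=
  four_schwarz_general O N G
end

section
/- Let H be a topological VE-space over a topologically ordered *-space Z and let k : X × X → L*_c(H) be a 2-positive kernel such that k(x,x) satisfies: for each increasing continuous seminorm p on Z there is a constant C_x ≥ 0 with p([k(x,x)h, h]) ≤ C_x p([h,h]) for all h ∈ H. Then for any x, y ∈ X and increasing continuous seminorm p, there is a constant C ≥ 0 such that p([k(y,x)h, k(y,x)h]) ≤ C · p([h,h]) for all h ∈ H. -/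
lemma le_mul_of_forall_two_mul_le {a b c : ℝ} (ha : 0 ≤ a) (hc : 0 ≤ c)
    (h : ∀ t : ℝ, 0 ≤ t → 2 * t * a ≤ b + t ^ 2 * (c * a)) : a ≤ c * b := by
  have hb : 0 ≤ b := by simpa using h 0 le_rfl
  rcases ha.eq_or_lt with rfl | ha
  · positivity
  rcases hc.eq_or_lt with rfl | hc
  · have := h (b / a + 1) (by positivity)
    rw [zero_mul, mul_zero, add_zero, mul_assoc, add_mul, div_mul_cancel₀ _ ha.ne'] at this
    linarith
  · have := h c⁻¹ (by positivity)
    field_simp at this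
    nlinarith

namespace OrderedStarSpace

variable {Z : Type*} [AddCommGroup Z] [Module ℂ Z] (O : OrderedStarSpace Z)

def starAddHom : Z →+ Z := AddMonoidHom.mk' O.star O.star_add

lemma star_sub (u w : Z) : O.star (u - w) = O.star u - O.star w :=
  O.starAddHom.map_sub u w

lemma star_eq_of_star_add_eq {u w : Z} (h₁ : O.star (u + w) = u + w)
    (h₂ : O.star (Complex.I • (w - u)) = Complex.I • (w - u)) : O.star u = w := by
  rw [O.star_add] at h₁
  rw [O.star_smul, Complex.conj_I, O.star_sub, neg_smul, ← smul_neg, neg_sub] at h₂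
  have h₂' := smul_right_injective Z Complex.I_ne_zero h₂
  linear_combination (norm := module) (1 / 2 : ℂ) • h₁ + (1 / 2 : ℂ) • h₂'

end OrderedStarSpace

namespace IncSeminorm

variable {Z : Type*} [AddCommGroup Z] [Module ℂ Z] {O : OrderedStarSpace Z} (N : IncSeminorm O)

lemma p_ofReal_smul {r : ℝ} (hr : 0 ≤ r) (z : Z) : N.p ((r : ℂ) • z) = r * N.p z := by
  rw [N.smul, Complex.norm_real, Real.norm_of_nonneg hr]

end IncSeminorm

namespace VEGramian

variable {Z E : Type*} [AddCommGroup Z] [Module ℂ Z] [AddCommGroup E] [Module ℂ E]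
  {O : OrderedStarSpace Z} (G : VEGramian O E)

lemma star_ip (u v : E) : O.star (G.ip u v) = G.ip v u := (G.herm v u).symm

lemma ip_zero_right (u : E) : G.ip u 0 = 0 := by
  simpa using G.smul_right 0 u 0

lemma ip_smul_left (c : ℂ) (u v : E) : G.ip (c • u) v = (starRingEnd ℂ) c • G.ip u v := by
  rw [← G.star_ip, G.smul_right, O.star_smul, G.star_ip]

lemma ip_zero_left (u : E) : G.ip 0 u = 0 := by
  simpa using G.ip_smul_left 0 0 u

lemma ip_swap_of_mem_pos {u v : E} (h : G.ip u v ∈ O.pos) : G.ip v u = G.ip u v := by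
  rw [← G.star_ip]
  exact O.pos_selfadjoint _ h

def IsTwoPositive {X : Type*} (k : X → X → Module.End ℂ E) : Prop :=
  ∀ (x₁ x₂ : X) (h₁ h₂ : E),
    G.ip (k x₁ x₁ h₁) h₁ + G.ip (k x₁ x₂ h₂) h₁ +
      G.ip (k x₂ x₁ h₁) h₂ + G.ip (k x₂ x₂ h₂) h₂ ∈ O.pos

namespace IsTwoPositive

variable {G} {X : Type*} {k : X → X → Module.End ℂ E}

lemma ip_apply_self_mem_pos (hk : G.IsTwoPositive k) (x : X) (h : E) :
    G.ip (k x x h) h ∈ O.pos := by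
  simpa [G.ip_zero_right, G.ip_zero_left] using hk x x h 0

lemma star_off_diag_eq (hk : G.IsTwoPositive k) (x y : X) (h g : E) :
    O.star (G.ip (k x y g) h + G.ip (k y x h) g) = G.ip (k x y g) h + G.ip (k y x h) g := by
  have hs := O.pos_selfadjoint _ (hk x y h g)
  simp only [O.star_add, G.star_ip] at hs ⊢
  rw [G.ip_swap_of_mem_pos (hk.ip_apply_self_mem_pos x h),
    G.ip_swap_of_mem_pos (hk.ip_apply_self_mem_pos y g)] at hs
  linear_combination (norm := module) hs

lemma ip_apply_left (hk : G.IsTwoPositive k) (x y : X) (g h : E) :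
    G.ip (k x y g) h = G.ip g (k y x h) := by
  have hI := hk.star_off_diag_eq x y h (Complex.I • g)
  rw [map_smul, G.ip_smul_left, G.smul_right, Complex.conj_I] at hI
  have key := O.star_eq_of_star_add_eq (hk.star_off_diag_eq x y h g) (by
    convert hI using 2 <;> module)
  rw [← G.star_ip (k y x h), ← key, O.star_involutive]

lemma quadratic_mem_pos (hk : G.IsTwoPositive k) (x y : X) (h : E) (t : ℝ) :
    G.ip (k x x h) h + ((t ^ 2 : ℝ) : ℂ) • G.ip (k y y (k y x h)) (k y x h) -
      ((2 * t : ℝ) : ℂ) • G.ip (k y x h) (k y x h) ∈ O.pos := by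
  have hpos := hk x y h (-(t : ℂ) • k y x h)
  rw [map_smul, map_smul, G.ip_smul_left, G.smul_right, G.smul_right, G.ip_smul_left,
    hk.ip_apply_left x y (k y x h), map_neg, Complex.conj_ofReal] at hpos
  convert hpos using 1
  push_cast
  module

lemma two_mul_p_le (hk : G.IsTwoPositive k) (N : IncSeminorm O) (x y : X) (h : E) {t : ℝ}
    (ht : 0 ≤ t) :
    2 * t * N.p (G.ip (k y x h) (k y x h)) ≤
      N.p (G.ip (k x x h) h) + t ^ 2 * N.p (G.ip (k y y (k y x h)) (k y x h)) :=
  calc 2 * t * N.p (G.ip (k y x h) (k y x h))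
      = N.p (((2 * t : ℝ) : ℂ) • G.ip (k y x h) (k y x h)) :=
        (N.p_ofReal_smul (by positivity) _).symm
    _ ≤ N.p (G.ip (k x x h) h + ((t ^ 2 : ℝ) : ℂ) • G.ip (k y y (k y x h)) (k y x h)) :=
        N.mono _ _ (O.pos_smul _ (by positivity) _ (G.ip_pos _)) (hk.quadratic_mem_pos x y h t)
    _ ≤ _ := N.add_le _ _
    _ = _ := by rw [N.p_ofReal_smul (by positivity)]

end IsTwoPositive

end VEGramian

theorem two_positive_kernel_propagation_general {Z E X : Type*} [AddCommGroup Z]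
    [Module ℂ Z] [AddCommGroup E] [Module ℂ E]
    (O : OrderedStarSpace Z) (N : IncSeminorm O)
    (G : VEGramian O E)
    (k : X → X → Module.End ℂ E)
    (h2pos : ∀ (x₁ x₂ : X) (h₁ h₂ : E),
      G.ip (k x₁ x₁ h₁) h₁ + G.ip (k x₁ x₂ h₂) h₁ +
        G.ip (k x₂ x₁ h₁) h₂ + G.ip (k x₂ x₂ h₂) h₂ ∈ O.pos)
    (hdiag : ∀ z : X, ∃ C : ℝ, 0 ≤ C ∧
      ∀ h : E, N.p (G.ip (k z z h) h) ≤ C * N.p (G.ip h h)) :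
    ∀ x y : X, ∃ C : ℝ, 0 ≤ C ∧
      ∀ h : E, N.p (G.ip (k y x h) (k y x h)) ≤ C * N.p (G.ip h h) := by
  have hk : G.IsTwoPositive k := h2pos
  intro x y
  obtain ⟨Cx, hCx0, hCx⟩ := hdiag x
  obtain ⟨Cy, hCy0, hCy⟩ := hdiag y
  refine ⟨Cy * Cx, mul_nonneg hCy0 hCx0, fun h => ?_⟩
  rw [mul_assoc]
  refine le_mul_of_forall_two_mul_le (N.nonneg _) hCy0 fun t ht => ?_
  calc 2 * t * N.p (G.ip (k y x h) (k y x h))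
      ≤ N.p (G.ip (k x x h) h) + t ^ 2 * N.p (G.ip (k y y (k y x h)) (k y x h)) :=
        hk.two_mul_p_le N x y h ht
    _ ≤ Cx * N.p (G.ip h h) + t ^ 2 * (Cy * N.p (G.ip (k y x h) (k y x h))) := by
        gcongr
        exacts [hCx h, hCy _]

/-- propagation of boundedness through a 2-positive kernel:
if the diagonal of a 2-positive kernel `k` satisfies
`p([k(z,z)h, h]) ≤ C_z p([h,h])` for every point `z` (for the increasing
continuous seminorm `p`), then for all `x, y` there is `C ≥ 0` with
`p([k(y,x)h, k(y,x)h]) ≤ C p([h,h])` for all `h`. -/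
theorem two_positive_kernel_propagation {Z E X : Type*} [AddCommGroup Z]
    [Module ℂ Z] [TopologicalSpace Z] [AddCommGroup E] [Module ℂ E] [Nonempty X]
    (O : OrderedStarSpace Z) (N : IncSeminorm O) (hcont : Continuous N.p)
    (G : VEGramian O E)
    (k : X → X → Module.End ℂ E)
    (hadj : ∀ x y : X, ∃ S : Module.End ℂ E,
      ∀ h g : E, G.ip (k x y h) g = G.ip h (S g))
    (h2pos : ∀ (x₁ x₂ : X) (h₁ h₂ : E),
      G.ip (k x₁ x₁ h₁) h₁ + G.ip (k x₁ x₂ h₂) h₁ +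
        G.ip (k x₂ x₁ h₁) h₂ + G.ip (k x₂ x₂ h₂) h₂ ∈ O.pos)
    (hdiag : ∀ z : X, ∃ C : ℝ, 0 ≤ C ∧
      ∀ h : E, N.p (G.ip (k z z h) h) ≤ C * N.p (G.ip h h)) :
    ∀ x y : X, ∃ C : ℝ, 0 ≤ C ∧
      ∀ h : E, N.p (G.ip (k y x h) (k y x h)) ≤ C * N.p (G.ip h h) :=
  two_positive_kernel_propagation_general O N G k h2pos hdiag
end
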